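/- Let C be a category with a terminal object and finite products (a cartesian category), equipped with a comonad (T, ε, δ), let D be the co-Kleisli category of T, and let J : C → D be the canonical identity-on-objects functor induced by the comonadic adjunction. If the endofunctor T ⋙ T (the composite of the underlying endofunctor of T with itself) has a bifree algebra, then D has exactly one dinatural fixpoint operator uniform with respect to J: such an operator exists, and any two uniform dinatural fixpoint operators on D are equal. -/

import Mathlib

open CategoryTheory CategoryTheory.Limits

/-- A bifree algebra for an endofunctor `T : C ⥤ C`: an algebra `(V, a)` that is initial
among `T`-algebras, whose structure map `a` is an isomorphism, and such that the coalgebra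
`(V, a⁻¹)` is terminal among `T`-coalgebras. -/
def IsBifreeAlgebra {C : Type*} [Category C] (T : C ⥤ C) (V : C) (a : T.obj V ⟶ V) : Prop :=
  Nonempty (IsInitial (Endofunctor.Algebra.mk V a : Endofunctor.Algebra T)) ∧
  ∃ hiso : IsIso a,
    Nonempty (IsTerminal
      (Endofunctor.Coalgebra.mk V (@inv _ _ _ _ a hiso) : Endofunctor.Coalgebra T))


/-!
Write `S = T ⋙ T` and `(V, a)` for the bifree `S`-algebra. In the co-Kleisli category, `V` plays
the role of the vertical natural numbers: `succ = δ ≫ a` is the successor, and terminality of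
`(V, a⁻¹)` says that from every object there is exactly one point of `V` fixed by `succ`, `omega`.
For `f : A ⟶ B` and `g : B ⟶ A`, initiality of `(V, a)` yields `pairLift : V ⟶ T A` such that
`J (pairLift ≫ f)` intertwines `succ` with `g ≫ f`. Uniformity therefore forces
`fix (g ≫ f) = omega ≫ J (pairLift ≫ f)`; with `g = 𝟙` this gives uniqueness, and taking the
formula as a definition gives existence. Dinaturality reduces to the rolling identities
`pairLift f g = roll ≫ T (pairLift g f ≫ g)` and `δ ≫ T omega = omega ≫ roll`, the latter because
the rolled coalgebra `(T V, T a⁻¹)` receives at most one map from any coalgebra.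
-/

namespace CategoryTheory

namespace Cokleisli

variable {C : Type*} [Category C] {T : Comonad C}

lemma comp_toCokleisli_map_of {A B D : Cokleisli T} (f : A ⟶ B) (s : B.of ⟶ D.of) :
    (f ≫ (Adjunction.toCokleisli T).map s).of = f.of ≫ s := by
  show T.δ.app A.of ≫ T.map f.of ≫ T.ε.app B.of ≫ s = f.of ≫ s
  have hε : T.map f.of ≫ T.ε.app B.of = T.ε.app (T.obj A.of) ≫ f.of := T.ε.naturality f.of
  rw [reassoc_of% hε, Comonad.left_counit_assoc]

lemma toCokleisli_map_comp_of {A B D : Cokleisli T} (s : A.of ⟶ B.of) (g : B ⟶ D) :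
    ((Adjunction.toCokleisli T).map s ≫ g).of = T.map s ≫ g.of := by
  show T.δ.app A.of ≫ T.map (T.ε.app A.of ≫ s) ≫ g.of = T.map s ≫ g.of
  rw [Functor.map_comp, Category.assoc, Comonad.right_counit_assoc]

lemma comp_toCokleisli_map_eq_iff {A B : Cokleisli T} (f : A ⟶ A) (g : B ⟶ B)
    (s : A.of ⟶ B.of) :
    f ≫ (Adjunction.toCokleisli T).map s = (Adjunction.toCokleisli T).map s ≫ g ↔
      f.of ≫ s = T.map s ≫ g.of := by
  rw [← comp_toCokleisli_map_of, ← toCokleisli_map_comp_of]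
  exact ⟨congrArg Hom.of, hom_ext T⟩

end Cokleisli

namespace Comonad

variable {C : Type*} [Category C] {T : Comonad C} {Z : C}

def IsFixpointOperator (fix : ∀ A : Cokleisli T, (A ⟶ A) → (Cokleisli.mk T Z ⟶ A)) : Prop :=
  ∀ (A : Cokleisli T) (f : A ⟶ A), fix A f ≫ f = fix A f

def IsDinatural (fix : ∀ A : Cokleisli T, (A ⟶ A) → (Cokleisli.mk T Z ⟶ A)) : Prop :=
  ∀ (A B : Cokleisli T) (f : A ⟶ B) (g : B ⟶ A), fix B (g ≫ f) = fix A (f ≫ g) ≫ f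

def IsUniform (fix : ∀ A : Cokleisli T, (A ⟶ A) → (Cokleisli.mk T Z ⟶ A)) : Prop :=
  ∀ (A B : Cokleisli T) (s : A.of ⟶ B.of) (f : A ⟶ A) (g : B ⟶ B),
    f ≫ (Cokleisli.Adjunction.toCokleisli T).map s =
      (Cokleisli.Adjunction.toCokleisli T).map s ≫ g →
    fix A f ≫ (Cokleisli.Adjunction.toCokleisli T).map s = fix B g

variable (T)

def pairAlgebra {X Y : C} (x : T.obj X ⟶ Y) (y : T.obj Y ⟶ X) :
    Endofunctor.Algebra ((T : C ⥤ C) ⋙ (T : C ⥤ C)) :=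
  ⟨T.obj X, T.map (T.map x ≫ y)⟩

def comulCoalgebra (Z : C) : Endofunctor.Coalgebra ((T : C ⥤ C) ⋙ (T : C ⥤ C)) :=
  ⟨T.obj Z, T.δ.app Z ≫ T.map (T.δ.app Z)⟩

def succ {V : C} (a : T.obj (T.obj V) ⟶ V) : Cokleisli.mk T V ⟶ Cokleisli.mk T V :=
  ⟨T.δ.app V ≫ a⟩

lemma comp_succ_of {V Z : C} {a : T.obj (T.obj V) ⟶ V} (p : Cokleisli.mk T Z ⟶ Cokleisli.mk T V) :
    (p ≫ T.succ a).of = T.δ.app Z ≫ T.map (T.δ.app Z) ≫ T.map (T.map p.of) ≫ a := by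
  have hδ : T.map p.of ≫ T.δ.app V = T.δ.app (T.obj Z) ≫ T.map (T.map p.of) :=
    T.δ.naturality p.of
  show T.δ.app Z ≫ T.map p.of ≫ T.δ.app V ≫ a = _
  rw [reassoc_of% hδ, Comonad.coassoc_assoc]

section Bifree

variable {V : C} {a : ((T : C ⥤ C) ⋙ (T : C ⥤ C)).obj V ⟶ V}
  (hin : IsInitial (Endofunctor.Algebra.mk V a :
    Endofunctor.Algebra ((T : C ⥤ C) ⋙ (T : C ⥤ C))))

def pairLift {X Y : C} (x : T.obj X ⟶ Y) (y : T.obj Y ⟶ X) : V ⟶ T.obj X :=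
  (hin.to (T.pairAlgebra x y)).f

lemma pairLift_comm {X Y : C} (x : T.obj X ⟶ Y) (y : T.obj Y ⟶ X) :
    T.map (T.map (T.pairLift hin x y)) ≫ T.map (T.map x ≫ y) = a ≫ T.pairLift hin x y :=
  (hin.to (T.pairAlgebra x y)).h

def roll : V ⟶ T.obj V :=
  (hin.to ⟨T.obj V, T.map a⟩).f

lemma roll_comm : T.map (T.map (T.roll hin)) ≫ T.map a = a ≫ T.roll hin :=
  (hin.to ⟨T.obj V, T.map a⟩).h

lemma pairLift_eq_roll_comp {X Y : C} (x : T.obj X ⟶ Y) (y : T.obj Y ⟶ X) :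
    T.pairLift hin x y = T.roll hin ≫ T.map (T.pairLift hin y x ≫ y) := by
  let h : Endofunctor.Algebra.mk V a ⟶ T.pairAlgebra x y :=
    { f := T.roll hin ≫ T.map (T.pairLift hin y x ≫ y)
      h := by
        show T.map (T.map (T.roll hin ≫ T.map (T.pairLift hin y x ≫ y))) ≫ T.map (T.map x ≫ y) =
          a ≫ T.roll hin ≫ T.map (T.pairLift hin y x ≫ y)
        rw [← reassoc_of% (T.roll_comm hin), ← Functor.map_comp _ a,
          ← reassoc_of% (T.pairLift_comm hin y x)]
        simp only [Functor.map_comp, Category.assoc] }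
  exact congrArg Endofunctor.Algebra.Hom.f (hin.hom_ext (hin.to _) h)

lemma pairLift_comp_map {X Y X' Y' : C} {x : T.obj X ⟶ Y} {y : T.obj Y ⟶ X}
    {x' : T.obj X' ⟶ Y'} {y' : T.obj Y' ⟶ X'} (s : X ⟶ X') (t : Y ⟶ Y')
    (hx : x ≫ t = T.map s ≫ x') (hy : y ≫ s = T.map t ≫ y') :
    T.pairLift hin x y ≫ T.map s = T.pairLift hin x' y' := by
  let h : Endofunctor.Algebra.mk V a ⟶ T.pairAlgebra x' y' :=
    { f := T.pairLift hin x y ≫ T.map s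
      h := by
        have hs : T.map (T.map s) ≫ T.map x' ≫ y' = (T.map x ≫ y) ≫ s := by
          rw [← Functor.map_comp_assoc, ← hx, Functor.map_comp_assoc, ← hy, Category.assoc]
        simp only [pairAlgebra, Functor.comp_map, Functor.map_comp, Category.assoc]
        rw [← Functor.map_comp, ← Functor.map_comp, hs, Functor.map_comp,
          ← reassoc_of% (T.pairLift_comm hin x y), Functor.map_comp] }
  exact congrArg Endofunctor.Algebra.Hom.f (hin.hom_ext h (hin.to _))

lemma succ_comp_toCokleisli_map {A B : Cokleisli T} (f : A ⟶ B) (g : B ⟶ A) :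
    T.succ a ≫ (Cokleisli.Adjunction.toCokleisli T).map (T.pairLift hin f.of g.of ≫ f.of) =
      (Cokleisli.Adjunction.toCokleisli T).map (T.pairLift hin f.of g.of ≫ f.of) ≫ (g ≫ f) := by
  refine (Cokleisli.comp_toCokleisli_map_eq_iff (T.succ a) (g ≫ f) _).2 ?_
  show (T.δ.app V ≫ a) ≫ T.pairLift hin f.of g.of ≫ f.of =
    T.map (T.pairLift hin f.of g.of ≫ f.of) ≫ T.δ.app B.of ≫ T.map g.of ≫ f.of
  have hδh := T.δ.naturality (T.pairLift hin f.of g.of)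
  have hδf := T.δ.naturality f.of
  simp only [Functor.comp_map] at hδh hδf
  rw [Category.assoc, ← reassoc_of% (T.pairLift_comm hin f.of g.of), ← reassoc_of% hδh]
  simp only [Functor.map_comp, Category.assoc, reassoc_of% hδf]

section Terminal

variable [IsIso a] (hterm : IsTerminal (Endofunctor.Coalgebra.mk V (inv a) :
    Endofunctor.Coalgebra ((T : C ⥤ C) ⋙ (T : C ⥤ C))))

include hterm in
lemma rolled_hom_ext {W : Endofunctor.Coalgebra ((T : C ⥤ C) ⋙ (T : C ⥤ C))}
    (q₁ q₂ : W ⟶ ⟨T.obj V, T.map (inv a)⟩) : q₁ = q₂ := by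
  have recover (q : W ⟶ ⟨T.obj V, T.map (inv a)⟩) : W.str ≫ T.map (T.map q.f ≫ a) = q.f := by
    have hq : W.str ≫ T.map (T.map q.f) = q.f ≫ T.map (inv a) := q.h
    rw [Functor.map_comp, ← Category.assoc, hq, Category.assoc, ← Functor.map_comp,
      IsIso.inv_hom_id, Functor.map_id, Category.comp_id]
  let unroll (q : W ⟶ ⟨T.obj V, T.map (inv a)⟩) :
      (⟨T.obj W.V, T.map W.str⟩ : Endofunctor.Coalgebra ((T : C ⥤ C) ⋙ (T : C ⥤ C))) ⟶
        ⟨V, inv a⟩ :=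
    { f := T.map q.f ≫ a
      h := by
        show T.map W.str ≫ T.map (T.map (T.map q.f ≫ a)) = (T.map q.f ≫ a) ≫ inv a
        rw [← Functor.map_comp, recover, Category.assoc, IsIso.hom_inv_id, Category.comp_id] }
  have h := congrArg Endofunctor.Coalgebra.Hom.f (hterm.hom_ext (unroll q₁) (unroll q₂))
  ext
  rw [← recover q₁, ← recover q₂]
  exact congrArg (fun k => W.str ≫ T.map k) h

noncomputable def corec (Z : C) : T.obj Z ⟶ V :=
  (hterm.from (T.comulCoalgebra Z)).f

lemma corec_comm (Z : C) :
    T.δ.app Z ≫ T.map (T.δ.app Z) ≫ T.map (T.map (T.corec hterm Z)) = T.corec hterm Z ≫ inv a :=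
  (Category.assoc _ _ _).symm.trans (hterm.from (T.comulCoalgebra Z)).h

noncomputable def omega (Z : C) : Cokleisli.mk T Z ⟶ Cokleisli.mk T V :=
  ⟨T.corec hterm Z⟩

lemma comp_succ_eq_self_iff {Z : C} (p : Cokleisli.mk T Z ⟶ Cokleisli.mk T V) :
    p ≫ T.succ a = p ↔
      T.δ.app Z ≫ T.map (T.δ.app Z) ≫ T.map (T.map p.of) = p.of ≫ inv a := by
  rw [IsIso.eq_comp_inv]
  simp only [Category.assoc, ← comp_succ_of]
  exact ⟨congrArg Cokleisli.Hom.of, Cokleisli.hom_ext T⟩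

lemma omega_comp_succ (Z : C) : T.omega hterm Z ≫ T.succ a = T.omega hterm Z :=
  (T.comp_succ_eq_self_iff _).2 (T.corec_comm hterm Z)

lemma eq_omega_of_comp_succ {Z : C} (p : Cokleisli.mk T Z ⟶ Cokleisli.mk T V)
    (hp : p ≫ T.succ a = p) : p = T.omega hterm Z := by
  let hom : T.comulCoalgebra Z ⟶ ⟨V, inv a⟩ :=
    { f := p.of
      h := (Category.assoc _ _ _).trans ((T.comp_succ_eq_self_iff p).1 hp) }
  exact Cokleisli.hom_ext T
    (congrArg Endofunctor.Coalgebra.Hom.f (hterm.hom_ext hom (hterm.from _)))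

variable (Z : C)

lemma comul_comp_map_corec :
    T.δ.app Z ≫ T.map (T.corec hterm Z) = T.corec hterm Z ≫ T.roll hin := by
  have hcorec := congrArg T.map (T.corec_comm hterm Z)
  have hroll : inv a ≫ T.map (T.map (T.roll hin)) = T.roll hin ≫ T.map (inv a) := by
    rw [IsIso.inv_comp_eq, ← reassoc_of% (T.roll_comm hin), ← Functor.map_comp,
      IsIso.hom_inv_id, Functor.map_id, Category.comp_id]
  simp only [Functor.map_comp] at hcorec
  let lhs : T.comulCoalgebra Z ⟶ ⟨T.obj V, T.map (inv a)⟩ :=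
    { f := T.δ.app Z ≫ T.map (T.corec hterm Z)
      h := by
        show (T.δ.app Z ≫ T.map (T.δ.app Z)) ≫ T.map (T.map (T.δ.app Z ≫ T.map (T.corec hterm Z))) =
          (T.δ.app Z ≫ T.map (T.corec hterm Z)) ≫ T.map (inv a)
        simp only [Functor.map_comp, Category.assoc, hcorec] }
  let rhs : T.comulCoalgebra Z ⟶ ⟨T.obj V, T.map (inv a)⟩ :=
    { f := T.corec hterm Z ≫ T.roll hin
      h := by
        show (T.δ.app Z ≫ T.map (T.δ.app Z)) ≫ T.map (T.map (T.corec hterm Z ≫ T.roll hin)) =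
          (T.corec hterm Z ≫ T.roll hin) ≫ T.map (inv a)
        simp only [Functor.map_comp, Category.assoc, reassoc_of% (T.corec_comm hterm Z), hroll] }
  exact congrArg Endofunctor.Coalgebra.Hom.f (T.rolled_hom_ext hterm lhs rhs)

noncomputable def pairFix {A B : Cokleisli T} (f : A ⟶ B) (g : B ⟶ A) : Cokleisli.mk T Z ⟶ B :=
  T.omega hterm Z ≫ (Cokleisli.Adjunction.toCokleisli T).map (T.pairLift hin f.of g.of ≫ f.of)

lemma pairFix_of {A B : Cokleisli T} (f : A ⟶ B) (g : B ⟶ A) :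
    (T.pairFix hin hterm Z f g).of = T.corec hterm Z ≫ T.pairLift hin f.of g.of ≫ f.of :=
  Cokleisli.comp_toCokleisli_map_of _ _

lemma pairFix_comp_self {A B : Cokleisli T} (f : A ⟶ B) (g : B ⟶ A) :
    T.pairFix hin hterm Z f g ≫ (g ≫ f) = T.pairFix hin hterm Z f g :=
  (Category.assoc _ _ _).trans
    ((congrArg (T.omega hterm Z ≫ ·) (T.succ_comp_toCokleisli_map hin f g).symm).trans
      ((Category.assoc _ _ _).symm.trans (congrArg (· ≫ _) (T.omega_comp_succ hterm Z))))

lemma pairFix_eq_pairFix_comp {A B : Cokleisli T} (f : A ⟶ B) (g : B ⟶ A) :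
    T.pairFix hin hterm Z f g = T.pairFix hin hterm Z g f ≫ f := by
  ext
  rw [Cokleisli.category_comp_of, pairFix_of, pairFix_of, T.pairLift_eq_roll_comp hin f.of g.of]
  simp only [Functor.map_comp, Category.assoc]
  rw [reassoc_of% (T.comul_comp_map_corec hin hterm Z)]

variable {Z} in
lemma eq_pairFix_of_isUniform {fix : ∀ A : Cokleisli T, (A ⟶ A) → (Cokleisli.mk T Z ⟶ A)}
    (hfix : IsFixpointOperator fix) (hunif : IsUniform fix)
    {A B : Cokleisli T} (f : A ⟶ B) (g : B ⟶ A) :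
    fix B (g ≫ f) = T.pairFix hin hterm Z f g := by
  refine (hunif _ _ _ _ _ (T.succ_comp_toCokleisli_map hin f g)).symm.trans ?_
  exact congrArg (· ≫ _) (T.eq_omega_of_comp_succ hterm _ (hfix _ _))

noncomputable def fixpoint : ∀ A : Cokleisli T, (A ⟶ A) → (Cokleisli.mk T Z ⟶ A) :=
  fun A e => T.pairFix hin hterm Z e (𝟙 A)

lemma isFixpointOperator_fixpoint : IsFixpointOperator (T.fixpoint hin hterm Z) := fun A e => by
  have h := T.pairFix_comp_self hin hterm Z e (𝟙 A)
  rwa [Category.id_comp] at h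

lemma isUniform_fixpoint : IsUniform (T.fixpoint hin hterm Z) := by
  intro A B s f g hsq
  have hsq' : f.of ≫ s = T.map s ≫ g.of := (Cokleisli.comp_toCokleisli_map_eq_iff f g s).1 hsq
  have hε : T.ε.app A.of ≫ s = T.map s ≫ T.ε.app B.of := (T.ε.naturality s).symm
  ext
  rw [Cokleisli.comp_toCokleisli_map_of]
  simp only [fixpoint, pairFix_of, Cokleisli.category_id_of, Category.assoc, hsq',
    reassoc_of% (T.pairLift_comp_map hin s s hsq' hε)]
  rfl

lemma isDinatural_fixpoint : IsDinatural (T.fixpoint hin hterm Z) := fun A B f g => by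
  have hfix := T.isFixpointOperator_fixpoint hin hterm Z
  have hunif := T.isUniform_fixpoint hin hterm Z
  rw [T.eq_pairFix_of_isUniform hin hterm hfix hunif f g,
    T.eq_pairFix_of_isUniform hin hterm hfix hunif g f]
  exact T.pairFix_eq_pairFix_comp hin hterm Z f g

variable {Z} in
lemma eq_fixpoint_of_isUniform {fix : ∀ A : Cokleisli T, (A ⟶ A) → (Cokleisli.mk T Z ⟶ A)}
    (hfix : IsFixpointOperator fix) (hunif : IsUniform fix) : fix = T.fixpoint hin hterm Z := by
  funext A e
  calc fix A e = fix A (𝟙 A ≫ e) := by rw [Category.id_comp]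
    _ = T.fixpoint hin hterm Z A e := T.eq_pairFix_of_isUniform hin hterm hfix hunif e (𝟙 A)

end Terminal

end Bifree

end Comonad

end CategoryTheory

theorem unique_uniform_dinatural_fixpoint_of_bifree_general
    {C : Type*} [Category C] [HasTerminal C] (T : Comonad C)
    (V : C) (a : ((T : C ⥤ C) ⋙ (T : C ⥤ C)).obj V ⟶ V)
    (hbifree : IsBifreeAlgebra ((T : C ⥤ C) ⋙ (T : C ⥤ C)) V a) :
    ∃! fix : ∀ A : Cokleisli T, (A ⟶ A) → ((Cokleisli.mk T (⊤_ C)) ⟶ A),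
      (∀ (A : Cokleisli T) (f : A ⟶ A), fix A f ≫ f = fix A f) ∧
      (∀ (A B : Cokleisli T) (f : A ⟶ B) (g : B ⟶ A),
        fix B (g ≫ f) = fix A (f ≫ g) ≫ f) ∧
      (∀ (A B : Cokleisli T) (s : A.of ⟶ B.of)
        (f : A ⟶ A) (g : B ⟶ B),
        f ≫ (Cokleisli.Adjunction.toCokleisli T).map s =
          (Cokleisli.Adjunction.toCokleisli T).map s ≫ g →
        fix A f ≫ (Cokleisli.Adjunction.toCokleisli T).map s = fix B g) := by
  obtain ⟨⟨hin⟩, hiso, ⟨hterm⟩⟩ := hbifree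
  refine ⟨T.fixpoint hin hterm (⊤_ C), ⟨T.isFixpointOperator_fixpoint hin hterm _,
    T.isDinatural_fixpoint hin hterm _, T.isUniform_fixpoint hin hterm _⟩, ?_⟩
  rintro fix ⟨hfix, -, hunif⟩
  exact T.eq_fixpoint_of_isUniform hin hterm hfix hunif

/-- Plotkin–Simpson, part 2: if `C` is cartesian (terminal object and finite products),
`T` is a comonad on `C`, and the endofunctor `T ⋙ T` has a bifree algebra, then the
co-Kleisli category of `T` has exactly one dinatural fixpoint operator uniform with respect
to the canonical functor `J : C → Cokleisli T`. -/
theorem unique_uniform_dinatural_fixpoint_of_bifree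
    {C : Type*} [Category C] [HasTerminal C] [HasFiniteProducts C] (T : Comonad C)
    (V : C) (a : ((T : C ⥤ C) ⋙ (T : C ⥤ C)).obj V ⟶ V)
    (hbifree : IsBifreeAlgebra ((T : C ⥤ C) ⋙ (T : C ⥤ C)) V a) :
    ∃! fix : ∀ A : Cokleisli T, (A ⟶ A) → ((Cokleisli.mk T (⊤_ C)) ⟶ A),
      (∀ (A : Cokleisli T) (f : A ⟶ A), fix A f ≫ f = fix A f) ∧
      (∀ (A B : Cokleisli T) (f : A ⟶ B) (g : B ⟶ A),
        fix B (g ≫ f) = fix A (f ≫ g) ≫ f) ∧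
      (∀ (A B : Cokleisli T) (s : A.of ⟶ B.of)
        (f : A ⟶ A) (g : B ⟶ B),
        f ≫ (Cokleisli.Adjunction.toCokleisli T).map s =
          (Cokleisli.Adjunction.toCokleisli T).map s ≫ g →
        fix A f ≫ (Cokleisli.Adjunction.toCokleisli T).map s = fix B g) :=
  unique_uniform_dinatural_fixpoint_of_bifree_general T V a hbifree
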